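/- Let H be a connected graph of order a. Then for any b ∈ ℕ, the cyclic Ramsey number satisfies 1 + (a−1)(b−2) ≤ R_cyc(H, P_b^mon) ≤ 1 + (a−1)(b−1). -/

import Mathlib

open SimpleGraph Finset

/-- A symmetric `k`-edge-coloring `χ` of the complete graph on `Fin n` contains a copy of `H`
in color `j` via a strictly increasing embedding. -/
def ContainsOrd {m n k : ℕ} (H : SimpleGraph (Fin m))
    (χ : Fin n → Fin n → Fin k) (j : Fin k) : Prop :=
  ∃ φ : Fin m → Fin n, StrictMono φ ∧ ∀ u v : Fin m, H.Adj u v → χ (φ u) (φ v) = j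

/-- Contains a copy via an embedding that is increasing up to a cyclic permutation. -/
def ContainsCyc {m n k : ℕ} (H : SimpleGraph (Fin m))
    (χ : Fin n → Fin n → Fin k) (j : Fin k) : Prop :=
  ∃ φ : Fin m → Fin n, (∃ t : Fin m, StrictMono fun i : Fin m => φ (i + t)) ∧
    ∀ u v : Fin m, H.Adj u v → χ (φ u) (φ v) = j

/-- Contains a copy via an arbitrary injective embedding. -/
def ContainsStd {m n k : ℕ} (H : SimpleGraph (Fin m))
    (χ : Fin n → Fin n → Fin k) (j : Fin k) : Prop :=
  ∃ φ : Fin m → Fin n, Function.Injective φ ∧ ∀ u v : Fin m, H.Adj u v → χ (φ u) (φ v) = j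

/-- The ordered Ramsey number of a family of graphs. -/
noncomputable def Rord {k : ℕ} (m : Fin k → ℕ) (H : ∀ j, SimpleGraph (Fin (m j))) : ℕ :=
  sInf {n | ∀ χ : Fin n → Fin n → Fin k, (∀ u v, χ u v = χ v u) → ∃ j, ContainsOrd (H j) χ j}

/-- The cyclic Ramsey number of a family of graphs. -/
noncomputable def Rcyc {k : ℕ} (m : Fin k → ℕ) (H : ∀ j, SimpleGraph (Fin (m j))) : ℕ :=
  sInf {n | ∀ χ : Fin n → Fin n → Fin k, (∀ u v, χ u v = χ v u) → ∃ j, ContainsCyc (H j) χ j}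

/-- The standard Ramsey number of a family of graphs. -/
noncomputable def Rstd {k : ℕ} (m : Fin k → ℕ) (H : ∀ j, SimpleGraph (Fin (m j))) : ℕ :=
  sInf {n | ∀ χ : Fin n → Fin n → Fin k, (∀ u v, χ u v = χ v u) → ∃ j, ContainsStd (H j) χ j}

/-- The two-color ordered Ramsey number. -/
noncomputable def Rord2 {a b : ℕ} (H₁ : SimpleGraph (Fin a)) (H₂ : SimpleGraph (Fin b)) : ℕ :=
  sInf {n | ∀ χ : Fin n → Fin n → Fin 2, (∀ u v, χ u v = χ v u) →
    ContainsOrd H₁ χ 0 ∨ ContainsOrd H₂ χ 1}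

/-- The two-color cyclic Ramsey number. -/
noncomputable def Rcyc2 {a b : ℕ} (H₁ : SimpleGraph (Fin a)) (H₂ : SimpleGraph (Fin b)) : ℕ :=
  sInf {n | ∀ χ : Fin n → Fin n → Fin 2, (∀ u v, χ u v = χ v u) →
    ContainsCyc H₁ χ 0 ∨ ContainsCyc H₂ χ 1}

/-- The monotone path of order `n`. -/
def monPath (n : ℕ) : SimpleGraph (Fin n) :=
  SimpleGraph.fromRel fun u v => (u : ℕ) + 1 = (v : ℕ)

/-- The monotone cycle of order `n`. -/
def monCycle (n : ℕ) : SimpleGraph (Fin n) :=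
  SimpleGraph.fromRel fun u v => (u : ℕ) + 1 = (v : ℕ) ∨ ((u : ℕ) = 0 ∧ (v : ℕ) = n - 1)

/-- The start-central star of order `n` (center `0`). -/
def starSC (n : ℕ) : SimpleGraph (Fin n) :=
  SimpleGraph.fromRel fun u _ => (u : ℕ) = 0

/-- The star of order `n` with center `c`. -/
def starG (n : ℕ) (c : Fin n) : SimpleGraph (Fin n) :=
  SimpleGraph.fromRel fun u _ => u = c

/-- The nested matching of order `n`. -/
def nestedMatching (n : ℕ) : SimpleGraph (Fin n) :=
  SimpleGraph.fromRel fun u v => (u : ℕ) + (v : ℕ) = n - 1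

/-- Rotational isomorphism of two graphs on `Fin m`. -/
def RotIso {m : ℕ} (G₁ G₂ : SimpleGraph (Fin m)) : Prop :=
  ∃ s : Fin m, ∀ u v : Fin m, G₁.Adj u v ↔ G₂.Adj (u + s) (v + s)

/-!
Upper bound: rank every vertex by the length of the longest increasing color-1 path ending there.
If no rank reaches `b - 1`, ranks take at most `b - 1` values, so among `1 + (a - 1)(b - 1)`
vertices some `a` share a rank; two of them joined in color 1 would have different ranks, so all
edges among them have color 0 and they carry an increasing copy of any graph of order `a`.

Lower bound: in the block coloring on `(a - 1)(b - 2)` vertices, a connected color-0 copy of `H`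
lies in one block of size `a - 1`. A cyclically increasing color-1 copy of `P_b` is increasing
except across one edge, so its blocks strictly increase at all but one of its `b - 1` steps and
it needs `b - 1` blocks, but there are only `b - 2`.
-/

theorem RelSeries.exists_length_eq_or_exists_fin_rank {α : Type*} (r : SetRel α α) (n : ℕ) :
    (∃ p : RelSeries r, p.length = n) ∨ ∃ f : α → Fin n, ∀ u v, (u, v) ∈ r → f u < f v := by
  classical
  by_cases hlong : ∃ p : RelSeries r, p.length = n
  · exact Or.inl hlong
  let P : α → ℕ → Prop := fun v k => ∃ p : RelSeries r, p.length = k ∧ p.last = v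
  have hP : ∀ v, P v (Nat.findGreatest (P v) n) := fun v =>
    Nat.findGreatest_spec (Nat.zero_le n) ⟨RelSeries.singleton r v, rfl, rfl⟩
  have hlt : ∀ v, Nat.findGreatest (P v) n < n := fun v => by
    obtain ⟨p, hp, -⟩ := hP v
    exact (Nat.findGreatest_le n).lt_of_ne fun h => hlong ⟨p, hp.trans h⟩
  refine Or.inr ⟨fun v => ⟨Nat.findGreatest (P v) n, hlt v⟩, fun u v huv => ?_⟩
  obtain ⟨p, hp, rfl⟩ := hP u
  have hpn := hp ▸ hlt p.last
  change Nat.findGreatest (P p.last) n < Nat.findGreatest (P v) n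
  rw [← hp]
  exact Nat.le_findGreatest hpn ⟨p.snoc v huv, by simp, by simp⟩

theorem SimpleGraph.Preconnected.eq_of_forall_adj {V β : Type*} {G : SimpleGraph V}
    (hG : G.Preconnected) {f : V → β} (hf : ∀ u v, G.Adj u v → f u = f v) (u v : V) :
    f u = f v := by
  obtain ⟨w⟩ := hG u v
  induction w with
  | nil => rfl
  | cons h _ ih => exact (hf _ _ h).trans ih

theorem monPath_adj_iff {n : ℕ} {u v : Fin n} :
    (monPath n).Adj u v ↔ (u : ℕ) + 1 = v ∨ (v : ℕ) + 1 = u := by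
  rw [monPath, SimpleGraph.fromRel_adj, and_iff_right_iff_imp]
  rintro (h | h) rfl <;> omega

section Containment

variable {m n k : ℕ} {H : SimpleGraph (Fin m)} {χ : Fin n → Fin n → Fin k} {j : Fin k}

theorem ContainsOrd.containsCyc [NeZero m] (h : ContainsOrd H χ j) : ContainsCyc H χ j := by
  obtain ⟨φ, hφ, hH⟩ := h
  exact ⟨φ, ⟨0, by simpa using hφ⟩, hH⟩

theorem ContainsCyc.pos (h : ContainsCyc H χ j) : 0 < n := by
  obtain ⟨φ, ⟨t, -⟩, -⟩ := h
  exact (φ t).pos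

theorem containsOrd_of_pairwise {s : Finset (Fin n)} (hs : m ≤ #s)
    (hχ : (s : Set (Fin n)).Pairwise fun u v => χ u v = j) : ContainsOrd H χ j := by
  obtain ⟨t, hts, ht⟩ := Finset.exists_subset_card_eq hs
  let φ := t.orderEmbOfFin ht
  refine ⟨φ, φ.strictMono, fun u v huv => ?_⟩
  exact hχ (hts (t.orderEmbOfFin_mem ht u)) (hts (t.orderEmbOfFin_mem ht v))
    (φ.injective.ne huv.ne)

theorem containsOrd_monPath_of_relSeries (hχ : ∀ u v, χ u v = χ v u)
    (p : RelSeries {e : Fin n × Fin n | e.1 < e.2 ∧ χ e.1 e.2 = j}) :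
    ContainsOrd (monPath (p.length + 1)) χ j := by
  have hstep : ∀ i : Fin p.length, p i.castSucc < p i.succ ∧ χ (p i.castSucc) (p i.succ) = j :=
    p.step
  have hpath : ∀ u v : Fin (p.length + 1), (u : ℕ) + 1 = v → χ (p u) (p v) = j := by
    intro u v huv
    obtain ⟨i, rfl, rfl⟩ : ∃ i : Fin p.length, i.castSucc = u ∧ i.succ = v :=
      ⟨⟨u, by omega⟩, rfl, Fin.ext (by simp [← huv])⟩
    exact (hstep i).2
  refine ⟨p, Fin.strictMono_iff_lt_succ.mpr fun i => (hstep i).1, fun u v huv => ?_⟩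
  rcases monPath_adj_iff.mp huv with h | h
  · exact hpath u v h
  · exact hχ _ _ ▸ hpath v u h

end Containment

theorem containsOrd_or_containsOrd_monPath {a b N : ℕ} (H : SimpleGraph (Fin a))
    (hN : (a - 1) * b < N) (χ : Fin N → Fin N → Fin 2) (hχ : ∀ u v, χ u v = χ v u) :
    ContainsOrd H χ 0 ∨ ContainsOrd (monPath (b + 1)) χ 1 := by
  rcases RelSeries.exists_length_eq_or_exists_fin_rank
    {e : Fin N × Fin N | e.1 < e.2 ∧ χ e.1 e.2 = 1} b with ⟨p, rfl⟩ | ⟨f, hf⟩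
  · exact Or.inr (containsOrd_monPath_of_relSeries hχ p)
  obtain ⟨y, hy⟩ := Fintype.exists_lt_card_fiber_of_mul_lt_card f (n := a - 1)
    (by simpa [mul_comm] using hN)
  refine Or.inl (containsOrd_of_pairwise (s := {x | f x = y}) (by omega) ?_)
  intro u hu v hv huv
  simp only [coe_filter, Finset.mem_univ, true_and, Set.mem_ofPred_eq] at hu hv
  by_contra h
  have h1 : χ u v = 1 := by omega
  rcases huv.lt_or_gt with hlt | hlt
  · exact (hf u v ⟨hlt, h1⟩).ne (hu.trans hv.symm)
  · exact (hf v u ⟨hlt, hχ u v ▸ h1⟩).ne (hv.trans hu.symm)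

def blockColoring (k n : ℕ) (u v : Fin n) : Fin 2 :=
  if (u : ℕ) / k = (v : ℕ) / k then 0 else 1

theorem blockColoring_symm (k n : ℕ) (u v : Fin n) :
    blockColoring k n u v = blockColoring k n v u := by
  simp only [blockColoring, eq_comm]

theorem blockColoring_eq_zero_iff {k n : ℕ} {u v : Fin n} :
    blockColoring k n u v = 0 ↔ (u : ℕ) / k = (v : ℕ) / k := by
  unfold blockColoring; split_ifs <;> simp_all

theorem blockColoring_eq_one_iff {k n : ℕ} {u v : Fin n} :
    blockColoring k n u v = 1 ↔ (u : ℕ) / k ≠ (v : ℕ) / k := by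
  unfold blockColoring; split_ifs <;> simp_all

theorem not_containsCyc_blockColoring_zero {a n k : ℕ} {H : SimpleGraph (Fin a)}
    (hH : H.Connected) (hk : 0 < k) (hka : k < a) : ¬ ContainsCyc H (blockColoring k n) 0 := by
  rintro ⟨φ, ⟨t, hφ⟩, hedge⟩
  have : NeZero a := ⟨t.pos.ne'⟩
  have hinj : Function.Injective φ := (Equiv.addRight t).injective_comp φ |>.mp hφ.injective
  have hblock : ∀ u v, (φ u : ℕ) / k = (φ v : ℕ) / k :=
    hH.preconnected.eq_of_forall_adj fun u v huv => blockColoring_eq_zero_iff.mp (hedge u v huv)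
  have hmod : Function.Injective fun i => (⟨φ i % k, Nat.mod_lt _ hk⟩ : Fin k) := by
    intro u v huv
    apply hinj
    rw [Fin.ext_iff, ← Nat.div_add_mod (φ u) k, ← Nat.div_add_mod (φ v) k, hblock u v]
    rw [Fin.mk.injEq] at huv
    rw [huv]
  have hak := Fintype.card_le_of_injective _ hmod
  simp only [Fintype.card_fin] at hak
  omega

theorem not_containsCyc_monPath_blockColoring {b n k : ℕ} (hk : 0 < k) (hn : n ≤ k * (b - 2)) :
    ¬ ContainsCyc (monPath b) (blockColoring k n) 1 := by
  rintro ⟨φ, ⟨t, hφ⟩, hedge⟩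
  obtain ⟨c, rfl⟩ : ∃ c, b = c + 1 := ⟨b - 1, by have := t.pos; omega⟩
  -- `e` is the only position where the increasing order `i ↦ φ (i + t)` leaves the path.
  let e : Fin (c + 1) := Fin.last c - t
  let g : Fin (c + 1) → ℕ := fun i => (φ (i + t) : ℕ) / k + if e < i then 1 else 0
  have hg : StrictMono g := by
    refine Fin.strictMono_iff_lt_succ.mpr fun i => ?_
    have hle : (φ (i.castSucc + t) : ℕ) / k ≤ (φ (i.succ + t) : ℕ) / k :=
      Nat.div_le_div_right (hφ Fin.castSucc_lt_succ).le
    have hind : e < i.castSucc → e < i.succ := fun h => h.trans Fin.castSucc_lt_succ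
    by_cases hi : i.castSucc = e
    · simp only [g, hi, lt_irrefl, if_false, if_pos (hi ▸ Fin.castSucc_lt_succ)]
      rw [← hi]; omega
    have hne : i.castSucc + t < Fin.last c :=
      Fin.lt_last_iff_ne_last.mpr fun h => hi (by simp only [e, ← h, add_sub_cancel_right])
    have hadj : (monPath (c + 1)).Adj (i.castSucc + t) (i.succ + t) := by
      rw [monPath_adj_iff, ← Fin.coeSucc_eq_succ, add_right_comm, Fin.val_add_one_of_lt hne]
      exact Or.inl rfl
    have hdiff := blockColoring_eq_one_iff.mp (hedge _ _ hadj)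
    simp only [g]
    split_ifs <;> omega
  have hlt : ∀ i, g i < c := fun i => by
    have : (φ (i + t) : ℕ) / k < c + 1 - 2 :=
      (Nat.div_lt_iff_lt_mul hk).mpr (by rw [mul_comm]; omega)
    simp only [g]
    split_ifs <;> omega
  have := Fintype.card_le_of_injective (fun i => (⟨g i, hlt i⟩ : Fin c))
    fun i j h => hg.injective (Fin.mk.inj_iff.mp h)
  simp at this

theorem not_containsCyc_blockColoring {a b n : ℕ} {H : SimpleGraph (Fin a)} (hH : H.Connected)
    (hn : n ≤ (a - 1) * (b - 2)) :
    ¬ (ContainsCyc H (blockColoring (a - 1) n) 0 ∨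
      ContainsCyc (monPath b) (blockColoring (a - 1) n) 1) := by
  intro h
  have hn0 : 0 < n := h.elim ContainsCyc.pos ContainsCyc.pos
  have hk : 0 < a - 1 := Nat.pos_of_ne_zero fun h0 => by simp [h0] at hn; omega
  rcases h with h | h
  · exact not_containsCyc_blockColoring_zero hH hk (by omega) h
  · exact not_containsCyc_monPath_blockColoring hk hn h

theorem stmt7 {a : ℕ} (H : SimpleGraph (Fin a)) (hH : H.Connected) (b : ℕ) (hb : 1 ≤ b) :
    1 + (a - 1) * (b - 2) ≤ Rcyc2 H (monPath b) ∧
      Rcyc2 H (monPath b) ≤ 1 + (a - 1) * (b - 1) := by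
  obtain ⟨c, rfl⟩ : ∃ c, b = c + 1 := ⟨b - 1, by omega⟩
  have : NeZero a := ⟨hH.nonempty.some.pos.ne'⟩
  have hupper : 1 + (a - 1) * (c + 1 - 1) ∈ {n | ∀ χ : Fin n → Fin n → Fin 2,
      (∀ u v, χ u v = χ v u) → ContainsCyc H χ 0 ∨ ContainsCyc (monPath (c + 1)) χ 1} :=
    fun χ hχ => (containsOrd_or_containsOrd_monPath H (by simp) χ hχ).imp
      ContainsOrd.containsCyc ContainsOrd.containsCyc
  refine ⟨le_csInf ⟨_, hupper⟩ fun n hn => ?_, Nat.sInf_le hupper⟩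
  by_contra! hlt
  exact not_containsCyc_blockColoring hH (by omega) (hn _ (blockColoring_symm _ _))
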